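/- arXiv:2005.01998 — 2 statements merged into one kernel-verified Lean document; each statement's English description precedes it below -/
import Mathlib

section
/- Let Φ = (G, 𝕋, φ) be a complex unit gain graph. If Φ is balanced and G is the disjoint union of regular complete bipartite graphs K_{n₁,n₁}, …, K_{n_ω,n_ω} together with isolated vertices, then 𝓔(Φ) = 2μ(G) = 2(n₁ + ⋯ + n_ω). -/
open Matrix

variable {V : Type*}

/-- A gain function on `G` with values in the circle group `𝕋 ⊆ ℂ`:
each ordered pair of adjacent vertices gets a unit complex number, and
reversing the pair inverts the gain. -/
structure IsGain (G : SimpleGraph V) (φ : V → V → ℂ) : Prop where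
  unit : ∀ u v, G.Adj u v → ‖φ u v‖ = 1
  inv : ∀ u v, G.Adj u v → φ v u = (φ u v)⁻¹

/-- The adjacency matrix of the complex unit gain graph `(G, 𝕋, φ)`. -/
noncomputable def gainAdj (G : SimpleGraph V) (φ : V → V → ℂ) : Matrix V V ℂ :=
  fun u v => @ite _ (G.Adj u v) (Classical.dec _) (φ u v) 0

theorem IsGain.isHermitian {G : SimpleGraph V} {φ : V → V → ℂ} (hg : IsGain G φ) :
    (gainAdj G φ).IsHermitian := by
  ext u v
  simp only [conjTranspose_apply, gainAdj]
  by_cases h : G.Adj u v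
  · rw [if_pos h.symm, if_pos h, hg.inv u v h, Complex.inv_eq_conj (hg.unit u v h)]
    simp
  · rw [if_neg (fun h' => h h'.symm), if_neg h]
    simp

/-- The energy of a complex unit gain graph: the sum of the absolute values of the
eigenvalues of its (Hermitian) adjacency matrix. -/
noncomputable def gainEnergy [Fintype V] [DecidableEq V] (G : SimpleGraph V) (φ : V → V → ℂ)
    (hg : IsGain G φ) : ℝ :=
  ∑ i, |hg.isHermitian.eigenvalues i|

/-- `M` is a matching of `G`: a set of edges of `G`, pairwise sharing no vertex. -/
def IsGraphMatching (G : SimpleGraph V) (M : Finset (Sym2 V)) : Prop :=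
  (↑M : Set (Sym2 V)) ⊆ G.edgeSet ∧
    ∀ e ∈ M, ∀ f ∈ M, e ≠ f → ∀ v : V, v ∈ e → v ∉ f

/-- The matching number of `G`: the largest size of a matching. -/
noncomputable def matchingNumber (G : SimpleGraph V) : ℕ :=
  sSup {n | ∃ M : Finset (Sym2 V), IsGraphMatching G M ∧ M.card = n}

/-- The gain of a walk: the product of the gains along its darts. -/
def walkGain {G : SimpleGraph V} (φ : V → V → ℂ) {u v : V} (w : G.Walk u v) : ℂ :=
  (w.darts.map fun d => φ d.toProd.1 d.toProd.2).prod

/-- A complex unit gain graph is balanced if every cycle has gain `1`. -/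
def IsBalanced (G : SimpleGraph V) (φ : V → V → ℂ) : Prop :=
  ∀ (v : V) (w : G.Walk v v), w.IsCycle → walkGain φ w = 1

theorem IsGain.anti {G H : SimpleGraph V} {φ : V → V → ℂ} (hg : IsGain G φ) (hle : H ≤ G) :
    IsGain H φ :=
  ⟨fun u v h => hg.unit u v (hle h), fun u v h => hg.inv u v (hle h)⟩

theorem IsGain.induce {G : SimpleGraph V} {φ : V → V → ℂ} (hg : IsGain G φ) (s : Set V) :
    IsGain (G.induce s) (fun a b => φ a b) :=
  ⟨fun u v h => hg.unit u v h, fun u v h => hg.inv u v h⟩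

/-!
Balance makes every 4-cycle `u v u' v'` of a biclique `K_{X,Y}` have gain `1`, so on it
`φ u v = g u * conj (g v)` for some unit-valued `g`. Let `a`, `b` be `g` restricted to `X`, `Y`.
Then `A = ∑ (a bᴴ + b aᴴ)`, and since all these vectors are orthogonal with
`‖a‖² = ‖b‖² = n`, `A² = B²` for the positive semidefinite `B = ∑ (a aᴴ + b bᴴ)`. Hence `B = |A|`,
and the energy is `tr B = 2 ∑ n`. The matching number is `∑ n`: each biclique has a perfect
matching, and `⋃ X` covers every edge.
-/

open Finset Function
open scoped ComplexOrder

namespace Matrix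

namespace IsHermitian

variable {n 𝕜 : Type*} [Fintype n] [DecidableEq n] [RCLike 𝕜] {A : Matrix n n 𝕜}

lemma trace_cfc (hA : A.IsHermitian) (f : ℝ → ℝ) :
    (cfc f A).trace = ∑ i, (f (hA.eigenvalues i) : 𝕜) := by
  rw [cfc_eq hA, IsHermitian.cfc, Unitary.conjStarAlgAut_apply, trace_mul_cycle,
    Unitary.star_mul_self_of_mem hA.eigenvectorUnitary.2, one_mul, trace_diagonal]
  rfl

open scoped MatrixOrder in
lemma eq_cfc_abs_of_sq_eq_sq (hA : A.IsHermitian) {B : Matrix n n 𝕜} (hB : B.PosSemidef)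
    (h : A ^ 2 = B ^ 2) : B = cfc (fun x : ℝ => |x|) A := by
  have hAsa : IsSelfAdjoint A := hA
  refine (CFC.sq_eq_sq_iff _ _ hB.nonneg (cfc_nonneg fun x _ => abs_nonneg x)).mp ?_
  rw [← h, ← cfc_pow (fun x : ℝ => |x|) 2 A, ← cfc_pow_id (R := ℝ) A 2]
  simp only [sq_abs]

lemma sum_abs_eigenvalues_eq_trace (hA : A.IsHermitian) {B : Matrix n n 𝕜} (hB : B.PosSemidef)
    (h : A ^ 2 = B ^ 2) : ((∑ i, |hA.eigenvalues i| : ℝ) : 𝕜) = B.trace := by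
  rw [eq_cfc_abs_of_sq_eq_sq hA hB h, hA.trace_cfc]
  push_cast
  rfl

end IsHermitian

lemma sum_vecMulVec_mul_sum_vecMulVec_of_orthogonal {n κ R : Type*} [Fintype n] [Fintype κ]
    [DecidableEq κ] [CommSemiring R] [StarRing R] {e : κ → n → R} {c : κ → R}
    (he : ∀ k l, star (e k) ⬝ᵥ e l = if k = l then c k else 0) (σ τ : κ → κ) :
    (∑ k, vecMulVec (e k) (star (e (σ k)))) * ∑ k, vecMulVec (e k) (star (e (τ k))) =
      ∑ k, c (σ k) • vecMulVec (e k) (star (e (τ (σ k)))) := by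
  rw [Finset.sum_mul_sum]
  refine Finset.sum_congr rfl fun k _ => ?_
  simp_rw [vecMulVec_mul_vecMulVec, he, ite_smul, zero_smul, apply_ite (vecMulVec (e k)),
    vecMulVec_smul, vecMulVec_zero]
  rw [Finset.sum_ite_eq, if_pos (Finset.mem_univ _)]

end Matrix

namespace IsGain

variable {G : SimpleGraph V} {φ : V → V → ℂ} {u v : V}

lemma ne_zero (hg : IsGain G φ) (h : G.Adj u v) : φ u v ≠ 0 :=
  norm_ne_zero_iff.mp (by rw [hg.unit u v h]; exact one_ne_zero)

lemma mul_swap_eq_one (hg : IsGain G φ) (h : G.Adj u v) : φ u v * φ v u = 1 := by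
  rw [hg.inv u v h, mul_inv_cancel₀ (hg.ne_zero h)]

lemma conj_eq (hg : IsGain G φ) (h : G.Adj u v) : starRingEnd ℂ (φ u v) = φ v u := by
  rw [hg.inv u v h, Complex.inv_eq_conj (hg.unit u v h)]

end IsGain

lemma IsBalanced.gain_eq_of_adj {G : SimpleGraph V} {φ : V → V → ℂ} (hg : IsGain G φ)
    (hbal : IsBalanced G φ) {u v u' v' : V} (h₁ : G.Adj u v) (h₂ : G.Adj v u')
    (h₃ : G.Adj u' v') (h₄ : G.Adj v' u) :
    φ u v = φ u v' * φ v' u' * φ u' v := by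
  have e₂ := hg.mul_swap_eq_one h₂
  have e₃ := hg.mul_swap_eq_one h₃
  have e₄ := hg.mul_swap_eq_one h₄
  by_cases hu : u = u'
  · subst hu
    linear_combination φ u v * e₄.symm
  by_cases hv : v = v'
  · subst hv
    linear_combination φ u v * e₂.symm
  have hcycle : walkGain φ (.cons h₁ (.cons h₂ (.cons h₃ (.cons h₄ .nil)))) = 1 := by
    refine hbal u _ ?_
    simp [SimpleGraph.Walk.cons_isCycle_iff, hu, hv, h₁.ne, h₁.ne.symm, h₂.ne, h₃.ne, h₄.ne,
      Ne.symm hu]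
  simp only [walkGain, SimpleGraph.Walk.darts_cons, SimpleGraph.Walk.darts_nil, List.map_cons,
    List.map_nil, List.prod_cons, List.prod_nil, mul_one] at hcycle
  linear_combination φ u' v * φ v' u' * φ u v' * hcycle
    - φ u v * (φ u' v' * φ v' u' * φ v' u * φ u v' * e₂ + φ v' u * φ u v' * e₃ + e₄)

lemma IsBalanced.exists_switching_of_forall_adj [DecidableEq V] {G : SimpleGraph V}
    {φ : V → V → ℂ} (hg : IsGain G φ) (hbal : IsBalanced G φ) {X Y : Finset V}
    (hXY : ∀ u ∈ X, ∀ v ∈ Y, G.Adj u v) :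
    ∃ g : V → ℂ, (∀ v ∈ X ∪ Y, ‖g v‖ = 1) ∧
      ∀ u ∈ X, ∀ v ∈ Y, φ u v = g u * starRingEnd ℂ (g v) := by
  obtain rfl | ⟨x₀, hx₀⟩ := X.eq_empty_or_nonempty
  · exact ⟨1, by simp, by simp⟩
  obtain rfl | ⟨y₀, hy₀⟩ := Y.eq_empty_or_nonempty
  · exact ⟨1, by simp, by simp⟩
  -- the 4-cycle `u v x₀ y₀` gives `φ u v = φ u y₀ * φ y₀ x₀ * φ x₀ v`
  refine ⟨fun v => if v ∈ X then φ v y₀ else starRingEnd ℂ (φ y₀ x₀ * φ x₀ v), ?_, ?_⟩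
  · intro v hv
    by_cases hvX : v ∈ X
    · simp only [if_pos hvX]
      exact hg.unit _ _ (hXY v hvX y₀ hy₀)
    · have hvY : v ∈ Y := by simpa [hvX] using hv
      simp only [if_neg hvX, Complex.norm_conj, norm_mul]
      rw [hg.unit _ _ (hXY x₀ hx₀ y₀ hy₀).symm, hg.unit _ _ (hXY x₀ hx₀ v hvY), one_mul]
  · intro u hu v hv
    have hvX : v ∉ X := fun hvX => (hXY v hvX v hv).ne rfl
    simp only [if_pos hu, if_neg hvX, Complex.conj_conj]
    rw [← mul_assoc]
    exact hbal.gain_eq_of_adj hg (hXY u hu v hv) (hXY x₀ hx₀ v hv).symm (hXY x₀ hx₀ y₀ hy₀)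
      (hXY u hu y₀ hy₀).symm

section BicliqueDecomposition

variable {κ : Type*} {P : κ → Finset V} {g : κ → V → ℂ}

lemma star_indicator_dotProduct_indicator [Fintype V] [DecidableEq κ]
    (hP : Pairwise (Disjoint on P))
    (hunit : ∀ k, ∀ v ∈ P k, ‖g k v‖ = 1) (k l : κ) :
    star ((P k : Set V).indicator (g k)) ⬝ᵥ (P l : Set V).indicator (g l) =
      if k = l then (#(P k) : ℂ) else 0 := by
  split_ifs with hkl
  · subst hkl
    rw [dotProduct, ← Finset.sum_subset (Finset.subset_univ (P k)) fun v _ hv => by simp [hv],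
      Finset.card_eq_sum_ones, Nat.cast_sum]
    exact Finset.sum_congr rfl fun v hv => by simp [hv, Complex.conj_mul', hunit k v hv]
  · refine Finset.sum_eq_zero fun v _ => ?_
    by_cases hv : v ∈ P k
    · simp [Finset.disjoint_left.mp (hP hkl) hv]
    · simp [hv]

lemma gainAdj_eq_sum_vecMulVec [Fintype κ] {G : SimpleGraph V} {φ : V → V → ℂ}
    (hP : Pairwise (Disjoint on P)) {σ : κ → κ}
    (hadj : ∀ u v, G.Adj u v ↔ ∃ k, u ∈ P k ∧ v ∈ P (σ k))
    (hφ : ∀ k, ∀ u ∈ P k, ∀ v ∈ P (σ k), φ u v = g k u * starRingEnd ℂ (g (σ k) v)) :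
    gainAdj G φ = ∑ k, vecMulVec ((P k : Set V).indicator (g k))
      (star ((P (σ k) : Set V).indicator (g (σ k)))) := by
  classical
  ext u v
  simp only [gainAdj, Matrix.sum_apply, vecMulVec_apply, Pi.star_apply, Set.indicator_apply,
    Finset.mem_coe]
  by_cases h : G.Adj u v
  · obtain ⟨k, hu, hv⟩ := (hadj u v).1 h
    rw [if_pos h, Finset.sum_eq_single k, if_pos hu, if_pos hv, hφ k u hu v hv]
    · rfl
    · intro l _ hlk
      rw [if_neg (Finset.disjoint_right.mp (hP hlk) hu), zero_mul]
    · simp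
  · rw [if_neg h]
    refine (Finset.sum_eq_zero fun k _ => ?_).symm
    by_cases hu : u ∈ P k
    · by_cases hv : v ∈ P (σ k)
      · exact absurd ((hadj u v).2 ⟨k, hu, hv⟩) h
      · simp [hv]
    · simp [hu]

theorem gainEnergy_eq_sum_card [Fintype V] [DecidableEq V] [Fintype κ] [DecidableEq κ]
    {G : SimpleGraph V} {φ : V → V → ℂ} (hg : IsGain G φ)
    (hP : Pairwise (Disjoint on P)) {σ : κ → κ} (hσ : σ.Involutive)
    (hcard : ∀ k, #(P (σ k)) = #(P k))
    (hadj : ∀ u v, G.Adj u v ↔ ∃ k, u ∈ P k ∧ v ∈ P (σ k))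
    (hunit : ∀ k, ∀ v ∈ P k, ‖g k v‖ = 1)
    (hφ : ∀ k, ∀ u ∈ P k, ∀ v ∈ P (σ k), φ u v = g k u * starRingEnd ℂ (g (σ k) v)) :
    gainEnergy G φ hg = ∑ k, #(P k) := by
  set e : κ → V → ℂ := fun k => (P k : Set V).indicator (g k)
  have he : ∀ k l, star (e k) ⬝ᵥ e l = if k = l then (#(P k) : ℂ) else 0 :=
    star_indicator_dotProduct_indicator hP hunit
  set B := ∑ k, vecMulVec (e k) (star (e k))
  have hB_sq : B * B = ∑ k, (#(P k) : ℂ) • vecMulVec (e k) (star (e k)) :=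
    sum_vecMulVec_mul_sum_vecMulVec_of_orthogonal he id id
  have hsq : gainAdj G φ ^ 2 = B ^ 2 := by
    rw [sq, sq, gainAdj_eq_sum_vecMulVec hP hadj hφ,
      sum_vecMulVec_mul_sum_vecMulVec_of_orthogonal he, hB_sq]
    simp [hσ _, hcard]
  have hB : B.PosSemidef := posSemidef_sum _ fun k _ => posSemidef_vecMulVec_self_star _
  have htrace : B.trace = ∑ k, (#(P k) : ℂ) := by
    simp only [B, trace_sum, trace_vecMulVec]
    exact Finset.sum_congr rfl fun k _ => by rw [dotProduct_comm, he, if_pos rfl]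
  have := (hg.isHermitian.sum_abs_eigenvalues_eq_trace hB hsq).trans htrace
  rw [gainEnergy, ← RCLike.ofReal_inj (K := ℂ), this]
  push_cast
  rfl

end BicliqueDecomposition

lemma IsGraphMatching.card_le_of_forall_adj {G : SimpleGraph V} {M : Finset (Sym2 V)}
    (hM : IsGraphMatching G M) {S : Finset V} (hS : ∀ u v, G.Adj u v → u ∈ S ∨ v ∈ S) :
    #M ≤ #S := by
  refine Finset.card_le_card_of_forall_subsingleton (fun e v => v ∈ e) (fun e he => ?_)
    fun v _ e he e' he' => by_contra fun hne => hM.2 e he.1 e' he'.1 hne v he.2 he'.2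
  induction e using Sym2.ind with
  | _ u v =>
    rcases hS u v (hM.1 he) with h | h
    · exact ⟨u, h, Sym2.mem_mk_left u v⟩
    · exact ⟨v, h, Sym2.mem_mk_right u v⟩

section CompleteBipartiteUnion

variable {ι : Type*} {X Y : ι → Finset V} {G : SimpleGraph V}

def bicliqueSide (X Y : ι → Finset V) (k : ι × Bool) : Finset V :=
  bif k.2 then X k.1 else Y k.1

lemma pairwise_disjoint_bicliqueSide [DecidableEq V]
    (hdisj : ∀ i j : ι, ∀ u : V, u ∈ X i ∪ Y i → u ∈ X j ∪ Y j → i = j)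
    (hXY : ∀ i, ∀ u ∈ X i, ∀ v ∈ Y i, G.Adj u v) :
    Pairwise (Disjoint on bicliqueSide X Y) := by
  rintro ⟨i, s⟩ ⟨j, t⟩ hne
  refine Finset.disjoint_left.mpr fun v hvi hvj => ?_
  obtain rfl : i = j := hdisj i j v (by cases s <;> simp_all [bicliqueSide])
    (by cases t <;> simp_all [bicliqueSide])
  cases s <;> cases t <;> simp only [bicliqueSide, cond_true, cond_false] at hvi hvj <;>
    first | exact hne rfl | exact (hXY i v hvi v hvj).ne rfl | exact (hXY i v hvj v hvi).ne rfl

lemma adj_iff_exists_bicliqueSide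
    (hadj : ∀ u v : V, G.Adj u v ↔ ∃ i, (u ∈ X i ∧ v ∈ Y i) ∨ (u ∈ Y i ∧ v ∈ X i)) (u v : V) :
    G.Adj u v ↔ ∃ k, u ∈ bicliqueSide X Y k ∧ v ∈ bicliqueSide X Y (k.1, !k.2) := by
  simp [hadj, bicliqueSide, Prod.exists, or_comm]

theorem gainEnergy_eq_two_mul_sum_card [Fintype V] [DecidableEq V] [Fintype ι] {φ : V → V → ℂ}
    (hg : IsGain G φ) (hbal : IsBalanced G φ)
    (hdisj : ∀ i j : ι, ∀ u : V, u ∈ X i ∪ Y i → u ∈ X j ∪ Y j → i = j)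
    (hadj : ∀ u v : V, G.Adj u v ↔ ∃ i, (u ∈ X i ∧ v ∈ Y i) ∨ (u ∈ Y i ∧ v ∈ X i))
    (hcard : ∀ i, #(X i) = #(Y i)) :
    gainEnergy G φ hg = 2 * ∑ i, #(X i) := by
  classical
  have hXY : ∀ i, ∀ u ∈ X i, ∀ v ∈ Y i, G.Adj u v := fun i u hu v hv =>
    (hadj u v).2 ⟨i, .inl ⟨hu, hv⟩⟩
  choose g hunit hφ using fun i => hbal.exists_switching_of_forall_adj hg (hXY i)
  rw [gainEnergy_eq_sum_card hg (pairwise_disjoint_bicliqueSide hdisj hXY)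
    (σ := fun k => (k.1, !k.2)) (g := fun k => g k.1) (fun k => by simp)
    (fun k => ?card) (adj_iff_exists_bicliqueSide hadj) (fun k v hv => ?unit)
    (fun k u hu v hv => ?gain)]
  · simp [Fintype.sum_prod_type, bicliqueSide, hcard, two_mul, Finset.sum_add_distrib]
  case card => rcases k with ⟨i, _ | _⟩ <;> simp [bicliqueSide, hcard]
  case unit => exact hunit k.1 v (by rcases k with ⟨i, _ | _⟩ <;> simp_all [bicliqueSide])
  case gain =>
    rcases k with ⟨i, _ | _⟩ <;> simp only [bicliqueSide, cond_true, cond_false, Bool.not_true,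
      Bool.not_false] at hu hv
    · rw [← hg.conj_eq (hXY i v hv u hu), hφ i v hv u hu, map_mul, Complex.conj_conj, mul_comm]
    · exact hφ i u hu v hv

variable [Fintype ι]

lemma exists_isGraphMatching_card_eq_sum [DecidableEq V]
    (hdisj : ∀ i j : ι, ∀ u : V, u ∈ X i ∪ Y i → u ∈ X j ∪ Y j → i = j)
    (hXY : ∀ i, ∀ u ∈ X i, ∀ v ∈ Y i, G.Adj u v) (hcard : ∀ i, #(X i) = #(Y i)) :
    ∃ M, IsGraphMatching G M ∧ #M = ∑ i, #(X i) := by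
  have hXX {i j v} (hi : v ∈ X i) (hj : v ∈ X j) : i = j :=
    hdisj i j v (by simp [hi]) (by simp [hj])
  have hYY {i j v} (hi : v ∈ Y i) (hj : v ∈ Y j) : i = j :=
    hdisj i j v (by simp [hi]) (by simp [hj])
  have hXnotY {i j v} (hi : v ∈ X i) (hj : v ∈ Y j) : False := by
    obtain rfl := hdisj i j v (by simp [hi]) (by simp [hj])
    exact (hXY i v hi v hj).ne rfl
  let f (i : ι) : X i ≃ Y i := Finset.equivOfCardEq (hcard i)
  let edge (p : Σ i, X i) : Sym2 V := s(p.2, f p.1 p.2)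
  have hedge_eq {p q : Σ i, X i} (h : (p.2 : V) = q.2 ∨ (f p.1 p.2 : V) = f q.1 q.2) : p = q := by
    obtain ⟨i, x⟩ := p
    obtain ⟨j, y⟩ := q
    rcases h with h | h
    · obtain rfl := hXX x.2 (h ▸ y.2)
      exact Sigma.subtype_ext rfl h
    · obtain rfl := hYY (f i x).2 (h ▸ (f j y).2)
      obtain rfl : x = y := (f i).injective (Subtype.ext h)
      rfl
  refine ⟨Finset.univ.image edge, ⟨?_, ?_⟩, ?_⟩
  · rintro _ h
    obtain ⟨p, -, rfl⟩ := Finset.mem_image.mp h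
    exact hXY p.1 _ p.2.2 _ (f p.1 p.2).2
  · simp only [Finset.mem_image, Finset.mem_univ, true_and]
    rintro _ ⟨p, rfl⟩ _ ⟨q, rfl⟩ hne v hp hq
    refine hne (congrArg edge (hedge_eq ?_))
    simp only [edge, Sym2.mem_iff] at hp hq
    rcases hp with rfl | rfl <;> rcases hq with h | h
    · exact .inl h
    · exact (hXnotY p.2.2 (h ▸ (f q.1 q.2).2)).elim
    · exact (hXnotY q.2.2 (h ▸ (f p.1 p.2).2)).elim
    · exact .inr h
  · rw [Finset.card_image_of_injective _ fun p q h => hedge_eq ?_, Finset.card_univ,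
      Fintype.card_sigma]
    · simp
    · rcases Sym2.eq_iff.mp h with ⟨h, -⟩ | ⟨h, -⟩
      · exact .inl h
      · exact (hXnotY p.2.2 (h ▸ (f q.1 q.2).2)).elim

theorem matchingNumber_eq_sum_card [DecidableEq V]
    (hdisj : ∀ i j : ι, ∀ u : V, u ∈ X i ∪ Y i → u ∈ X j ∪ Y j → i = j)
    (hadj : ∀ u v : V, G.Adj u v ↔ ∃ i, (u ∈ X i ∧ v ∈ Y i) ∨ (u ∈ Y i ∧ v ∈ X i))
    (hcard : ∀ i, #(X i) = #(Y i)) :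
    matchingNumber G = ∑ i, #(X i) := by
  obtain ⟨M, hM, hMcard⟩ := exists_isGraphMatching_card_eq_sum hdisj
    (fun i u hu v hv => (hadj u v).2 ⟨i, .inl ⟨hu, hv⟩⟩) hcard
  refine IsGreatest.csSup_eq ⟨⟨M, hM, hMcard⟩, ?_⟩
  rintro _ ⟨M', hM', rfl⟩
  refine (hM'.card_le_of_forall_adj (S := Finset.univ.biUnion X) fun u v h => ?_).trans
    Finset.card_biUnion_le
  obtain ⟨i, ⟨hu, -⟩ | ⟨-, hv⟩⟩ := (hadj u v).1 h
  · exact .inl (Finset.mem_biUnion.mpr ⟨i, Finset.mem_univ i, hu⟩)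
  · exact .inr (Finset.mem_biUnion.mpr ⟨i, Finset.mem_univ i, hv⟩)

end CompleteBipartiteUnion

theorem gainEnergy_of_balanced_disjUnion_general [Fintype V] [DecidableEq V]
    (G : SimpleGraph V) (φ : V → V → ℂ) (hg : IsGain G φ)
    (hbal : IsBalanced G φ)
    (ι : Type) [Fintype ι] (X Y : ι → Finset V) (n : ι → ℕ)
    (hXcard : ∀ i, (X i).card = n i)
    (hYcard : ∀ i, (Y i).card = n i)
    (hdisj : ∀ i j : ι, ∀ u : V, u ∈ X i ∪ Y i → u ∈ X j ∪ Y j → i = j)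
    (hadj : ∀ u v : V, G.Adj u v ↔ ∃ i, (u ∈ X i ∧ v ∈ Y i) ∨ (u ∈ Y i ∧ v ∈ X i)) :
    gainEnergy G φ hg = 2 * (matchingNumber G : ℝ) ∧ matchingNumber G = ∑ i, n i := by
  have hcard i : #(X i) = #(Y i) := (hXcard i).trans (hYcard i).symm
  have hμ : matchingNumber G = ∑ i, n i := by
    simp only [matchingNumber_eq_sum_card hdisj hadj hcard, hXcard]
  refine ⟨?_, hμ⟩
  rw [gainEnergy_eq_two_mul_sum_card hg hbal hdisj hadj hcard, hμ]
  simp [hXcard]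

/-- if the gain graph is balanced and the underlying graph is the disjoint union
of regular complete bipartite graphs `K_{n i, n i}` (with parts `X i`, `Y i` of size `n i`)
together with isolated vertices, then the energy equals twice the matching number, which is
the sum of the `n i`. -/
theorem gainEnergy_of_balanced_disjUnion [Fintype V] [DecidableEq V]
    (G : SimpleGraph V) (φ : V → V → ℂ) (hg : IsGain G φ)
    (hbal : IsBalanced G φ)
    (ι : Type) [Fintype ι] (X Y : ι → Finset V) (n : ι → ℕ)
    (hpos : ∀ i, 0 < n i)
    (hXcard : ∀ i, (X i).card = n i)
    (hYcard : ∀ i, (Y i).card = n i)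
    (hXY : ∀ i, Disjoint (X i) (Y i))
    (hdisj : ∀ i j : ι, ∀ u : V, u ∈ X i ∪ Y i → u ∈ X j ∪ Y j → i = j)
    (hadj : ∀ u v : V, G.Adj u v ↔ ∃ i, (u ∈ X i ∧ v ∈ Y i) ∨ (u ∈ Y i ∧ v ∈ X i)) :
    gainEnergy G φ hg = 2 * (matchingNumber G : ℝ) ∧ matchingNumber G = ∑ i, n i :=
  gainEnergy_of_balanced_disjUnion_general G φ hg hbal ι X Y n hXcard hYcard hdisj hadj
end

section
/- Let Φ = (G, 𝕋, φ) be a complex unit gain graph with at least 3 vertices. If G is connected and has a pendant vertex (a vertex of degree 1), then 𝓔(Φ) > 2μ(G). -/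
/-!
For a Hermitian `A` and any `B` with `|z* B z| ≤ ‖z‖²` for all `z`, `Re tr (A B) ≤ ∑ |λᵢ(A)|`:
expand the trace in an orthonormal eigenbasis `uᵢ` of `A`, where it becomes `∑ λᵢ uᵢ* B uᵢ`.
For `A = A(Φ)`, the sum over the edges `pq` of a matching `M` of the gain-weighted edge matrices
`φ(p,q) E_pq + φ(q,p) E_qp` is such a `B` with `tr (A B) = 2 |M|`.

Let `v` be pendant with neighbour `w`, and `M` a maximum matching. Either one edge of `M` lies on
a path `v w x` whose third vertex is unmatched, or `vw` and `xy` are both in `M` for a path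
`v w x y`, with `v ≁ y` since `v` is pendant. Replacing these edges by the sign matrix of `P₃`,
resp. `P₄`, gauged by the gains, raises their contribution to the trace from `2`, resp. `4`, to the
energy `2√2`, resp. `2√5`, of the path.
-/

open Matrix

variable {V : Type*}

open Finset ComplexConjugate

section Matching

variable {G : SimpleGraph V} {φ : V → V → ℂ} {M : Finset (Sym2 V)}

theorem IsGain.conj_eq_s5 (hg : IsGain G φ) {p q : V} (h : G.Adj p q) :
    conj (φ p q) = φ q p := by
  rw [hg.inv p q h, Complex.inv_eq_conj (hg.unit p q h)]

theorem IsGain.mul_swap_eq_one_s5 (hg : IsGain G φ) {p q : V} (h : G.Adj p q) :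
    φ p q * φ q p = 1 := by
  rw [← hg.conj_eq_s5 h, Complex.mul_conj, Complex.normSq_eq_norm_sq, hg.unit p q h]
  norm_num

theorem Sym2.toFinset_eq_out [DecidableEq V] (e : Sym2 V) : e.toFinset = {e.out.1, e.out.2} := by
  conv_lhs => rw [← Quot.out_eq e]
  exact Sym2.toFinset_mk_eq

theorem IsGraphMatching.exists_eq_and_adj (hM : IsGraphMatching G M) {f : Sym2 V} (hf : f ∈ M)
    {a : V} (ha : a ∈ f) : ∃ b, f = s(a, b) ∧ G.Adj a b := by
  obtain ⟨b, rfl⟩ := Sym2.mem_iff_exists.1 ha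
  exact ⟨b, rfl, hM.1 hf⟩

theorem IsGraphMatching.insert [DecidableEq V] (hM : IsGraphMatching G M) {u v : V}
    (h : G.Adj u v) (hu : ∀ f ∈ M, u ∉ f) (hv : ∀ f ∈ M, v ∉ f) :
    IsGraphMatching G (insert s(u, v) M) := by
  refine ⟨?_, ?_⟩
  · rw [coe_insert, Set.insert_subset_iff]
    exact ⟨h, hM.1⟩
  · have key : ∀ f ∈ M, ∀ a ∈ s(u, v), a ∉ f := by
      intro f hf a ha
      rcases Sym2.mem_iff.1 ha with rfl | rfl
      exacts [hu f hf, hv f hf]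
    simp only [mem_insert]
    rintro e (rfl | he) f (rfl | hf) hef a hae
    exacts [absurd rfl hef, key f hf a hae, fun haf => key e he a haf hae,
      hM.2 e he f hf hef a hae]

theorem IsGraphMatching.mono (hM : IsGraphMatching G M) {N : Finset (Sym2 V)} (hNM : N ⊆ M) :
    IsGraphMatching G N :=
  ⟨(coe_subset.2 hNM).trans hM.1, fun e he f hf => hM.2 e (hNM he) f (hNM hf)⟩

theorem IsGraphMatching.adj_out (hM : IsGraphMatching G M) {e : Sym2 V} (he : e ∈ M) :
    G.Adj e.out.1 e.out.2 := by
  rw [← SimpleGraph.mem_edgeSet, Sym2.mk, Prod.mk.eta, Quot.out_eq]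
  exact hM.1 he

theorem IsGraphMatching.pairwiseDisjoint_toFinset [DecidableEq V] (hM : IsGraphMatching G M) :
    (M : Set (Sym2 V)).PairwiseDisjoint Sym2.toFinset := fun e he f hf hef =>
  disjoint_left.2 fun a hae haf =>
    hM.2 e he f hf hef a (Sym2.mem_toFinset.1 hae) (Sym2.mem_toFinset.1 haf)

variable [Fintype V]

theorem bddAbove_matchingCards (G : SimpleGraph V) :
    BddAbove {n | ∃ M : Finset (Sym2 V), IsGraphMatching G M ∧ M.card = n} := by
  classical
  exact ⟨Fintype.card (Sym2 V), fun _ ⟨M, _, hM⟩ => hM ▸ card_le_univ M⟩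

theorem exists_isGraphMatching_card_eq_matchingNumber (G : SimpleGraph V) :
    ∃ M, IsGraphMatching G M ∧ M.card = matchingNumber G :=
  Nat.sSup_mem (s := {n | ∃ M : Finset (Sym2 V), IsGraphMatching G M ∧ M.card = n})
    ⟨0, ∅, ⟨by simp, by simp⟩, rfl⟩ (bddAbove_matchingCards G)

theorem IsGraphMatching.card_le_matchingNumber (hM : IsGraphMatching G M) :
    M.card ≤ matchingNumber G :=
  le_csSup (bddAbove_matchingCards G) ⟨M, hM, rfl⟩

theorem IsGraphMatching.exists_mem_of_card_eq_matchingNumber (hM : IsGraphMatching G M)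
    (hmax : M.card = matchingNumber G) {u v : V} (h : G.Adj u v) (hu : ∀ f ∈ M, u ∉ f) :
    ∃ f ∈ M, v ∈ f := by
  classical
  by_contra! hv
  have hnotin : s(u, v) ∉ M := fun huv => hu _ huv (Sym2.mem_mk_left u v)
  have := (hM.insert h hu hv).card_le_matchingNumber
  rw [card_insert_of_notMem hnotin] at this
  omega

end Matching

theorem SimpleGraph.Walk.mem_of_adj_closed {G : SimpleGraph V} {s : Set V}
    (hs : ∀ a b, a ∈ s → G.Adj a b → b ∈ s) {a b : V} (p : G.Walk a b) (ha : a ∈ s) : b ∈ s := by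
  induction p with
  | nil => exact ha
  | cons h _ ih => exact ih (hs _ _ ha h)

theorem SimpleGraph.Connected.exists_adj_ne_of_forall_adj_eq [Fintype V] {G : SimpleGraph V}
    (hconn : G.Connected) (hcard : 3 ≤ Fintype.card V) {v w : V} (hvw : G.Adj v w)
    (hv : ∀ z, G.Adj v z → z = w) : ∃ x, G.Adj w x ∧ x ≠ v := by
  classical
  by_contra! hw
  have hclosed : ∀ a b, a ∈ ({v, w} : Set V) → G.Adj a b → b ∈ ({v, w} : Set V) := by
    rintro a b (rfl | rfl) hab
    exacts [Or.inr (hv b hab), Or.inl (hw b hab)]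
  have hsub : (univ : Finset V) ⊆ {v, w} := fun u _ => by
    simpa using (hconn.preconnected v u).some.mem_of_adj_closed hclosed (Or.inl rfl)
  have := (card_le_card hsub).trans card_le_two
  rw [card_univ] at this
  omega

section QuadForm

variable [Fintype V]

noncomputable def quadForm (B : Matrix V V ℂ) (z : V → ℂ) : ℂ := star z ⬝ᵥ (B *ᵥ z)

def QuadFormBoundedOn (B : Matrix V V ℂ) (S : Finset V) : Prop :=
  ∀ z : V → ℂ, ‖quadForm B z‖ ≤ ∑ i ∈ S, ‖z i‖ ^ 2

theorem quadForm_add (B C : Matrix V V ℂ) (z : V → ℂ) :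
    quadForm (B + C) z = quadForm B z + quadForm C z := by
  simp only [quadForm, add_mulVec, dotProduct_add]

theorem quadForm_smul (t : ℝ) (B : Matrix V V ℂ) (z : V → ℂ) :
    quadForm (t • B) z = t * quadForm B z := by
  simp only [quadForm, smul_mulVec, dotProduct_smul, Complex.real_smul]

theorem quadForm_sum {ι : Type*} (s : Finset ι) (B : ι → Matrix V V ℂ) (z : V → ℂ) :
    quadForm (∑ i ∈ s, B i) z = ∑ i ∈ s, quadForm (B i) z := by
  simp only [quadForm, sum_mulVec, dotProduct_sum]

variable {B C : Matrix V V ℂ} {S T : Finset V}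

theorem QuadFormBoundedOn.mono (hB : QuadFormBoundedOn B S) (hST : S ⊆ T) :
    QuadFormBoundedOn B T := fun z =>
  (hB z).trans (sum_le_sum_of_subset_of_nonneg hST fun _ _ _ => by positivity)

theorem QuadFormBoundedOn.add [DecidableEq V] (hB : QuadFormBoundedOn B S)
    (hC : QuadFormBoundedOn C T) (hST : Disjoint S T) :
    QuadFormBoundedOn (B + C) (S ∪ T) := fun z => by
  rw [quadForm_add, sum_union hST]
  exact (norm_add_le _ _).trans (add_le_add (hB z) (hC z))

theorem QuadFormBoundedOn.sum [DecidableEq V] {ι : Type*} {s : Finset ι}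
    {B : ι → Matrix V V ℂ} {S : ι → Finset V} (hB : ∀ i ∈ s, QuadFormBoundedOn (B i) (S i))
    (hS : (s : Set ι).PairwiseDisjoint S) :
    QuadFormBoundedOn (∑ i ∈ s, B i) (s.biUnion S) := fun z => by
  rw [quadForm_sum, sum_biUnion hS]
  exact (norm_sum_le _ _).trans (sum_le_sum fun i hi => hB i hi z)

theorem trace_mul_diagonal_mul_star_mul [DecidableEq V] (U B : Matrix V V ℂ) (d : V → ℂ) :
    (U * diagonal d * star U * B).trace = ∑ i, d i * quadForm B (fun k => U k i) := by
  rw [show U * diagonal d * star U * B = U * (diagonal d * (star U * B)) by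
    simp only [Matrix.mul_assoc], trace_mul_comm, Matrix.mul_assoc, Matrix.mul_assoc]
  simp only [trace, Matrix.diag, diagonal_mul]
  refine sum_congr rfl fun i _ => congrArg _ ?_
  simp only [quadForm, Matrix.mul_apply, dotProduct, mulVec, star_apply, Pi.star_apply, mul_sum]

theorem Matrix.IsHermitian.re_trace_mul_le_sum_abs_eigenvalues [DecidableEq V]
    {A : Matrix V V ℂ} (hA : A.IsHermitian) (hB : QuadFormBoundedOn B univ) :
    (A * B).trace.re ≤ ∑ i, |hA.eigenvalues i| := by
  set U : Matrix V V ℂ := ↑hA.eigenvectorUnitary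
  have hUU : star U * U = 1 := (mem_unitaryGroup_iff').mp hA.eigenvectorUnitary.2
  have htrace : (A * B).trace = ∑ i, (hA.eigenvalues i : ℂ) * quadForm B (fun k => U k i) := by
    conv_lhs => rw [hA.spectral_theorem, Unitary.conjStarAlgAut_apply]
    exact trace_mul_diagonal_mul_star_mul _ _ _
  have hunit : ∀ i, ∑ k, ‖U k i‖ ^ 2 = 1 := fun i => by
    have h := congrFun (congrFun hUU i) i
    simp only [Matrix.mul_apply, one_apply_eq, star_apply] at h
    have h' := congrArg Complex.re h
    simpa [Complex.re_sum, Complex.sq_norm, Complex.normSq_apply, Complex.mul_re] using h'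
  rw [htrace, Complex.re_sum]
  refine sum_le_sum fun i _ => ?_
  calc ((hA.eigenvalues i : ℂ) * quadForm B (fun k => U k i)).re
      ≤ ‖(hA.eigenvalues i : ℂ) * quadForm B (fun k => U k i)‖ := Complex.re_le_norm _
    _ ≤ |hA.eigenvalues i| * 1 := by
      rw [norm_mul, Complex.norm_real, Real.norm_eq_abs]
      exact mul_le_mul_of_nonneg_left ((hB _).trans (hunit i).le) (abs_nonneg _)
    _ = |hA.eigenvalues i| := mul_one _

end QuadForm

section EdgeMatrix

variable [Fintype V] [DecidableEq V]

noncomputable def edgeMatrix (p q : V) (c : ℂ) : Matrix V V ℂ :=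
  single p q c + single q p (conj c)

theorem quadForm_edgeMatrix (p q : V) (c : ℂ) (z : V → ℂ) :
    quadForm (edgeMatrix p q c) z = ((2 * (c * (conj (z p) * z q)).re : ℝ) : ℂ) := by
  rw [← Complex.add_conj]
  have hsingle : ∀ (a b : V) (d : ℂ), star z ⬝ᵥ (single a b d *ᵥ z) = star (z a) * (d * z b) :=
    fun a b d => by simp [single_mulVec, dotProduct, Function.update_apply]
  simp only [quadForm, edgeMatrix, add_mulVec, dotProduct_add, hsingle, Complex.star_def,
    map_mul, Complex.conj_conj]
  ring

theorem norm_quadForm_edgeMatrix_le (p q : V) (c : ℂ) (z : V → ℂ) :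
    ‖quadForm (edgeMatrix p q c) z‖ ≤ 2 * ‖c‖ * (‖z p‖ * ‖z q‖) := by
  rw [quadForm_edgeMatrix, Complex.norm_real, Real.norm_eq_abs, abs_mul, abs_two, mul_assoc]
  refine mul_le_mul_of_nonneg_left ((Complex.abs_re_le_norm _).trans_eq ?_) zero_le_two
  simp only [norm_mul, Complex.norm_conj]

theorem quadFormBoundedOn_edgeMatrix {p q : V} (hpq : p ≠ q) {c : ℂ} (hc : ‖c‖ ≤ 1) :
    QuadFormBoundedOn (edgeMatrix p q c) {p, q} := fun z => by
  rw [sum_pair hpq]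
  calc ‖quadForm (edgeMatrix p q c) z‖ ≤ 2 * ‖c‖ * (‖z p‖ * ‖z q‖) :=
        norm_quadForm_edgeMatrix_le p q c z
    _ ≤ 2 * (‖z p‖ * ‖z q‖) := by gcongr; exact mul_le_of_le_one_right zero_le_two hc
    _ ≤ ‖z p‖ ^ 2 + ‖z q‖ ^ 2 := by rw [← mul_assoc]; exact two_mul_le_add_sq _ _

theorem trace_mul_edgeMatrix (A : Matrix V V ℂ) (p q : V) (c : ℂ) :
    (A * edgeMatrix p q c).trace = c * A q p + conj c * A p q := by
  simp only [edgeMatrix, Matrix.mul_add, trace_add, trace_mul_single, op_smul_eq_mul]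
  ring

variable {G : SimpleGraph V} {φ : V → V → ℂ} {M : Finset (Sym2 V)}

theorem trace_gainAdj_mul_edgeMatrix (hg : IsGain G φ) {p q : V} (h : G.Adj p q) :
    (gainAdj G φ * edgeMatrix p q (φ p q)).trace = 2 := by
  rw [trace_mul_edgeMatrix, hg.conj_eq_s5 h, gainAdj, gainAdj, if_pos h, if_pos h.symm,
    mul_comm (φ q p), hg.mul_swap_eq_one_s5 h]
  norm_num

theorem trace_gainAdj_mul_edgeMatrix_of_not_adj {p q : V} (h : ¬G.Adj p q) (c : ℂ) :
    (gainAdj G φ * edgeMatrix p q c).trace = 0 := by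
  rw [trace_mul_edgeMatrix, gainAdj, gainAdj, if_neg h, if_neg (mt G.adj_symm h)]
  ring

noncomputable def matchingMatrix (φ : V → V → ℂ) (M : Finset (Sym2 V)) : Matrix V V ℂ :=
  ∑ e ∈ M, edgeMatrix e.out.1 e.out.2 (φ e.out.1 e.out.2)

theorem IsGraphMatching.quadFormBoundedOn_matchingMatrix (hg : IsGain G φ)
    (hM : IsGraphMatching G M) :
    QuadFormBoundedOn (matchingMatrix φ M) (M.biUnion Sym2.toFinset) :=
  QuadFormBoundedOn.sum (fun e he => by
    rw [Sym2.toFinset_eq_out]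
    exact quadFormBoundedOn_edgeMatrix (hM.adj_out he).ne (hg.unit _ _ (hM.adj_out he)).le)
    hM.pairwiseDisjoint_toFinset

theorem IsGraphMatching.trace_gainAdj_mul_matchingMatrix (hg : IsGain G φ)
    (hM : IsGraphMatching G M) : (gainAdj G φ * matchingMatrix φ M).trace = 2 * M.card := by
  rw [matchingMatrix, mul_sum, trace_sum,
    sum_congr rfl fun e he => trace_gainAdj_mul_edgeMatrix hg (hM.adj_out he), sum_const,
    nsmul_eq_mul, mul_comm]

end EdgeMatrix

section Paths

variable [Fintype V] [DecidableEq V] {G : SimpleGraph V} {φ : V → V → ℂ} {v w x y : V}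

theorem two_mul_add_le_sqrt_two_mul (a b c : ℝ) :
    2 * (a * b + b * c) ≤ √2 * (a ^ 2 + b ^ 2 + c ^ 2) := by
  have hs : √2 ^ 2 = 2 := Real.sq_sqrt zero_le_two
  have h2 : 0 < √2 := by positivity
  nlinarith [sq_nonneg (a + c - √2 * b), sq_nonneg (a - c), mul_pos h2 h2]

noncomputable def path3Matrix (φ : V → V → ℂ) (v w x : V) : Matrix V V ℂ :=
  (√2)⁻¹ • (edgeMatrix v w (φ v w) + edgeMatrix w x (φ w x))

theorem quadFormBoundedOn_path3Matrix (hg : IsGain G φ) (hvw : G.Adj v w) (hwx : G.Adj w x)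
    (hvx : v ≠ x) : QuadFormBoundedOn (path3Matrix φ v w x) {v, w, x} := fun z => by
  have hvw' := norm_quadForm_edgeMatrix_le v w (φ v w) z
  have hwx' := norm_quadForm_edgeMatrix_le w x (φ w x) z
  rw [hg.unit _ _ hvw] at hvw'
  rw [hg.unit _ _ hwx] at hwx'
  rw [sum_insert (by simp [hvw.ne, hvx]), sum_pair hwx.ne, path3Matrix, quadForm_smul,
    quadForm_add, norm_mul, Complex.norm_real, Real.norm_of_nonneg (by positivity),
    inv_mul_le_iff₀ (by positivity), ← add_assoc]
  calc _ ≤ 2 * (‖z v‖ * ‖z w‖ + ‖z w‖ * ‖z x‖) := by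
        linarith [norm_add_le (quadForm (edgeMatrix v w (φ v w)) z)
          (quadForm (edgeMatrix w x (φ w x)) z)]
    _ ≤ _ := two_mul_add_le_sqrt_two_mul _ _ _

theorem trace_gainAdj_mul_path3Matrix (hg : IsGain G φ) (hvw : G.Adj v w) (hwx : G.Adj w x) :
    (gainAdj G φ * path3Matrix φ v w x).trace = (2 * √2 : ℝ) := by
  have hs : √2 ^ 2 = 2 := Real.sq_sqrt zero_le_two
  rw [path3Matrix, Matrix.mul_smul, trace_smul, Matrix.mul_add, trace_add,
    trace_gainAdj_mul_edgeMatrix hg hvw, trace_gainAdj_mul_edgeMatrix hg hwx, Complex.real_smul]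
  have : (√2)⁻¹ * (2 + 2) = 2 * √2 := by
    field_simp
    linarith
  exact_mod_cast this

/-- The form is `u* C u / 2` for `C = [[0,2,0,-1],[2,0,1,0],[0,1,0,2],[-1,0,2,0]] = √5 sgn A(P₄)`.
As `C² = 5`, `‖(√5 ± C) u‖² = 2√5 (√5 ‖u‖² ± u* C u)`: these are the squares below. -/
theorem two_mul_abs_path4Form_le (u₁ u₂ u₃ u₄ : ℂ) :
    2 * |2 * (conj u₁ * u₂).re + (conj u₂ * u₃).re + 2 * (conj u₃ * u₄).re - (conj u₁ * u₄).re|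
      ≤ √5 * (‖u₁‖ ^ 2 + ‖u₂‖ ^ 2 + ‖u₃‖ ^ 2 + ‖u₄‖ ^ 2) := by
  have hs : √5 ^ 2 = 5 := Real.sq_sqrt (by norm_num)
  have hs0 : 0 < √5 := by positivity
  simp only [Complex.mul_re, Complex.conj_re, Complex.conj_im, Complex.sq_norm,
    Complex.normSq_apply]
  set s := √5
  obtain ⟨x₁, y₁⟩ := u₁
  obtain ⟨x₂, y₂⟩ := u₂
  obtain ⟨x₃, y₃⟩ := u₃
  obtain ⟨x₄, y₄⟩ := u₄
  dsimp only
  rw [← abs_two, ← abs_mul, abs_two, abs_le]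
  constructor
  · nlinarith [sq_nonneg (s*x₁+2*x₂-x₄), sq_nonneg (s*x₂+2*x₁+x₃), sq_nonneg (s*x₃+x₂+2*x₄),
      sq_nonneg (s*x₄+2*x₃-x₁), sq_nonneg (s*y₁+2*y₂-y₄), sq_nonneg (s*y₂+2*y₁+y₃),
      sq_nonneg (s*y₃+y₂+2*y₄), sq_nonneg (s*y₄+2*y₃-y₁)]
  · nlinarith [sq_nonneg (s*x₁-2*x₂+x₄), sq_nonneg (s*x₂-2*x₁-x₃), sq_nonneg (s*x₃-x₂-2*x₄),
      sq_nonneg (s*x₄-2*x₃+x₁), sq_nonneg (s*y₁-2*y₂+y₄), sq_nonneg (s*y₂-2*y₁-y₃),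
      sq_nonneg (s*y₃-y₂-2*y₄), sq_nonneg (s*y₄-2*y₃+y₁)]

noncomputable def path4Matrix (φ : V → V → ℂ) (v w x y : V) : Matrix V V ℂ :=
  (√5)⁻¹ • ((2 : ℝ) • edgeMatrix v w (φ v w) + edgeMatrix w x (φ w x) +
    (2 : ℝ) • edgeMatrix x y (φ x y) + edgeMatrix v y (-(φ v w * φ w x * φ x y)))

theorem conj_mul_mul_mul_of_norm_eq_one {a : ℂ} (ha : ‖a‖ = 1) (s t : ℂ) :
    conj (a * s) * (a * t) = conj s * t := by
  have : conj a * a = 1 := by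
    rw [mul_comm, Complex.mul_conj, Complex.normSq_eq_norm_sq, ha]; norm_num
  rw [map_mul]
  linear_combination (conj s * t) * this

theorem quadFormBoundedOn_path4Matrix (hg : IsGain G φ) (hvw : G.Adj v w) (hwx : G.Adj w x)
    (hxy : G.Adj x y) (hvx : v ≠ x) (hvy : v ≠ y) (hwy : w ≠ y) :
    QuadFormBoundedOn (path4Matrix φ v w x y) {v, w, x, y} := fun z => by
  set a := φ v w
  set b := φ w x
  set c := φ x y
  have ha : ‖a‖ = 1 := hg.unit _ _ hvw
  have hb : ‖b‖ = 1 := hg.unit _ _ hwx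
  have hc : ‖c‖ = 1 := hg.unit _ _ hxy
  -- the gauge `u = (z v, a z w, a b z x, a b c z y)` makes the path balanced
  have h₁ : a * (conj (z v) * z w) = conj (z v) * (a * z w) := by ring
  have h₂ : b * (conj (z w) * z x) = conj (a * z w) * (a * (b * z x)) := by
    rw [conj_mul_mul_mul_of_norm_eq_one ha]; ring
  have h₃ : c * (conj (z x) * z y) = conj (a * (b * z x)) * (a * (b * (c * z y))) := by
    rw [conj_mul_mul_mul_of_norm_eq_one ha, conj_mul_mul_mul_of_norm_eq_one hb]; ring
  have h₄ : -(a * b * c) * (conj (z v) * z y) = -(conj (z v) * (a * (b * (c * z y)))) := by ring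
  have hform := two_mul_abs_path4Form_le (z v) (a * z w) (a * (b * z x)) (a * (b * (c * z y)))
  simp only [norm_mul, ha, hb, hc, one_mul] at hform
  rw [sum_insert (by simp [hvw.ne, hvx, hvy]), sum_insert (by simp [hwx.ne, hwy]),
    sum_pair hxy.ne, path4Matrix, quadForm_smul, quadForm_add, quadForm_add, quadForm_add,
    quadForm_smul, quadForm_smul, quadForm_edgeMatrix, quadForm_edgeMatrix, quadForm_edgeMatrix,
    quadForm_edgeMatrix, h₁, h₂, h₃, h₄, Complex.neg_re]
  generalize (conj (z v) * (a * z w)).re = r₁ at hform ⊢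
  generalize (conj (a * z w) * (a * (b * z x))).re = r₂ at hform ⊢
  generalize (conj (a * (b * z x)) * (a * (b * (c * z y)))).re = r₃ at hform ⊢
  generalize (conj (z v) * (a * (b * (c * z y)))).re = r₄ at hform ⊢
  have hs0 : 0 < √5 := by positivity
  rw [show ((√5)⁻¹ : ℝ) * ((2 : ℝ) * ((2 * r₁ : ℝ) : ℂ) + ((2 * r₂ : ℝ) : ℂ) +
      (2 : ℝ) * ((2 * r₃ : ℝ) : ℂ) + ((2 * -r₄ : ℝ) : ℂ)) =
      ((2 * (2 * r₁ + r₂ + 2 * r₃ - r₄) / √5 : ℝ) : ℂ) by push_cast; ring,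
    Complex.norm_real, Real.norm_eq_abs, abs_div, abs_mul, abs_two, abs_of_pos hs0,
    div_le_iff₀ hs0]
  linarith

theorem trace_gainAdj_mul_path4Matrix (hg : IsGain G φ) (hvw : G.Adj v w) (hwx : G.Adj w x)
    (hxy : G.Adj x y) (hvy : ¬G.Adj v y) :
    (gainAdj G φ * path4Matrix φ v w x y).trace = (2 * √5 : ℝ) := by
  have hs : √5 ^ 2 = 5 := Real.sq_sqrt (by norm_num)
  simp only [path4Matrix, Matrix.mul_smul, trace_smul, Matrix.mul_add, trace_add,
    trace_gainAdj_mul_edgeMatrix hg hvw, trace_gainAdj_mul_edgeMatrix hg hwx,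
    trace_gainAdj_mul_edgeMatrix hg hxy, trace_gainAdj_mul_edgeMatrix_of_not_adj hvy,
    Complex.real_smul]
  have : (√5)⁻¹ * (2 * 2 + 2 + 2 * 2 + 0) = 2 * √5 := by
    field_simp
    linarith
  exact_mod_cast this

end Paths

section Energy

variable [Fintype V] [DecidableEq V] {G : SimpleGraph V} {φ : V → V → ℂ}
  {M : Finset (Sym2 V)} {v w x y : V}

theorem IsGraphMatching.two_mul_card_add_re_trace_le_gainEnergy (hg : IsGain G φ)
    (hM : IsGraphMatching G M) {B : Matrix V V ℂ} {S : Finset V} (hB : QuadFormBoundedOn B S)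
    (hS : Disjoint S (M.biUnion Sym2.toFinset)) :
    2 * M.card + (gainAdj G φ * B).trace.re ≤ gainEnergy G φ hg := by
  have h := hg.isHermitian.re_trace_mul_le_sum_abs_eigenvalues
    ((hB.add (hM.quadFormBoundedOn_matchingMatrix hg) hS).mono (subset_univ _))
  rw [Matrix.mul_add, trace_add, Complex.add_re, hM.trace_gainAdj_mul_matchingMatrix hg] at h
  simpa [gainEnergy, add_comm] using h

theorem IsGraphMatching.two_mul_card_sub_add_re_trace_le_gainEnergy (hg : IsGain G φ)
    (hM : IsGraphMatching G M) {N : Finset (Sym2 V)} (hNM : N ⊆ M) {B : Matrix V V ℂ}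
    {S : Finset V} (hB : QuadFormBoundedOn B S)
    (hS : ∀ a ∈ S, (∃ e ∈ N, a ∈ e) ∨ ∀ f ∈ M, a ∉ f) :
    2 * ((M.card : ℝ) - N.card) + (gainAdj G φ * B).trace.re ≤ gainEnergy G φ hg := by
  have hdisj : Disjoint S ((M \ N).biUnion Sym2.toFinset) := by
    refine disjoint_left.2 fun a ha haf => ?_
    obtain ⟨f, hf, haf⟩ := mem_biUnion.1 haf
    obtain ⟨hfM, hfN⟩ := mem_sdiff.1 hf
    rcases hS a ha with ⟨e, he, hae⟩ | hfree
    · exact hM.2 e (hNM he) f hfM (ne_of_mem_of_not_mem he hfN) a hae (Sym2.mem_toFinset.1 haf)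
    · exact hfree f hfM (Sym2.mem_toFinset.1 haf)
  have h := (hM.mono sdiff_subset).two_mul_card_add_re_trace_le_gainEnergy hg hB hdisj
  rwa [card_sdiff_of_subset hNM, Nat.cast_sub (card_le_card hNM)] at h

theorem IsGraphMatching.two_mul_card_lt_gainEnergy_of_path3 (hg : IsGain G φ)
    (hM : IsGraphMatching G M) (hvw : G.Adj v w) (hwx : G.Adj w x) (hvx : v ≠ x)
    {e : Sym2 V} (he : e ∈ M) (hcov : ∀ a ∈ ({v, w, x} : Finset V), a ∈ e ∨ ∀ f ∈ M, a ∉ f) :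
    2 * (M.card : ℝ) < gainEnergy G φ hg := by
  have h := hM.two_mul_card_sub_add_re_trace_le_gainEnergy hg (singleton_subset_iff.2 he)
    (quadFormBoundedOn_path3Matrix hg hvw hwx hvx) (by simpa using hcov)
  rw [trace_gainAdj_mul_path3Matrix hg hvw hwx, Complex.ofReal_re, card_singleton,
    Nat.cast_one] at h
  have : 1 < √2 := by rw [Real.lt_sqrt zero_le_one]; norm_num
  linarith

theorem IsGraphMatching.two_mul_card_lt_gainEnergy_of_path4 (hg : IsGain G φ)
    (hM : IsGraphMatching G M) (hvw : G.Adj v w) (hwx : G.Adj w x) (hxy : G.Adj x y)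
    (hvx : v ≠ x) (hvy : v ≠ y) (hwy : w ≠ y) (hnvy : ¬G.Adj v y) {e₁ e₂ : Sym2 V}
    (he₁ : e₁ ∈ M) (he₂ : e₂ ∈ M) (hne : e₁ ≠ e₂)
    (hcov : ∀ a ∈ ({v, w, x, y} : Finset V), a ∈ e₁ ∨ a ∈ e₂) :
    2 * (M.card : ℝ) < gainEnergy G φ hg := by
  have h := hM.two_mul_card_sub_add_re_trace_le_gainEnergy hg
    (insert_subset he₁ (singleton_subset_iff.2 he₂))
    (quadFormBoundedOn_path4Matrix hg hvw hwx hxy hvx hvy hwy)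
    fun a ha => Or.inl (by simpa using hcov a ha)
  rw [trace_gainAdj_mul_path4Matrix hg hvw hwx hxy hnvy, Complex.ofReal_re, card_pair hne,
    Nat.cast_ofNat] at h
  have : 2 < √5 := by rw [Real.lt_sqrt zero_le_two]; norm_num
  linarith

theorem IsGraphMatching.two_mul_card_lt_gainEnergy_of_pendant_mem (hg : IsGain G φ)
    (hM : IsGraphMatching G M) (hv : ∀ z, G.Adj v z → z = w) (hwx : G.Adj w x) (hxv : x ≠ v)
    (hvwM : s(v, w) ∈ M) : 2 * (M.card : ℝ) < gainEnergy G φ hg := by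
  have hvw : G.Adj v w := hM.1 hvwM
  by_cases hx : ∃ f ∈ M, x ∈ f
  · obtain ⟨f, hf, hxf⟩ := hx
    obtain ⟨y, rfl, hxy⟩ := hM.exists_eq_and_adj hf hxf
    have hne : s(v, w) ≠ s(x, y) := fun h => by
      have : x ∈ s(v, w) := h ▸ Sym2.mem_mk_left x y
      simp [hxv, hwx.ne'] at this
    have hyv : y ≠ v := fun h =>
      hM.2 _ hvwM _ hf hne v (Sym2.mem_mk_left v w) (h ▸ Sym2.mem_mk_right x y)
    have hyw : y ≠ w := fun h =>
      hM.2 _ hvwM _ hf hne w (Sym2.mem_mk_right v w) (h ▸ Sym2.mem_mk_right x y)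
    exact hM.two_mul_card_lt_gainEnergy_of_path4 hg hvw hwx hxy hxv.symm hyv.symm hyw.symm
      (fun h => hyw (hv y h)) hvwM hf hne (by simp)
  · push Not at hx
    exact hM.two_mul_card_lt_gainEnergy_of_path3 hg hvw hwx hxv.symm hvwM
      (by simpa using Or.inr hx)

theorem IsGraphMatching.two_mul_card_lt_gainEnergy_of_forall_not_mem (hg : IsGain G φ)
    (hM : IsGraphMatching G M) (hmax : M.card = matchingNumber G) (hvw : G.Adj v w)
    (hvM : ∀ f ∈ M, v ∉ f) : 2 * (M.card : ℝ) < gainEnergy G φ hg := by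
  obtain ⟨f, hf, hwf⟩ := hM.exists_mem_of_card_eq_matchingNumber hmax hvw hvM
  obtain ⟨x, rfl, hwx⟩ := hM.exists_eq_and_adj hf hwf
  have hvx : v ≠ x := fun h => hvM _ hf (h ▸ Sym2.mem_mk_right w v)
  exact hM.two_mul_card_lt_gainEnergy_of_path3 hg hvw hwx hvx hf (by simpa using Or.inr hvM)

end Energy

/-- a connected complex unit gain graph with at least 3 vertices having a
pendant vertex (a vertex with exactly one neighbour) has energy strictly greater than
twice the matching number. -/
theorem gainEnergy_gt_of_pendant [Fintype V] [DecidableEq V]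
    (G : SimpleGraph V) (φ : V → V → ℂ) (hg : IsGain G φ)
    (hcard : 3 ≤ Fintype.card V) (hconn : G.Connected)
    (hpend : ∃ v : V, ∃! w : V, G.Adj v w) :
    2 * (matchingNumber G : ℝ) < gainEnergy G φ hg := by
  obtain ⟨v, w, hvw, hv⟩ := hpend
  obtain ⟨M, hM, hμ⟩ := exists_isGraphMatching_card_eq_matchingNumber G
  rw [← hμ]
  by_cases hvwM : s(v, w) ∈ M
  · obtain ⟨x, hwx, hxv⟩ := hconn.exists_adj_ne_of_forall_adj_eq hcard hvw hv
    exact hM.two_mul_card_lt_gainEnergy_of_pendant_mem hg hv hwx hxv hvwM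
  · refine hM.two_mul_card_lt_gainEnergy_of_forall_not_mem hg hμ hvw fun f hf hvf => hvwM ?_
    obtain ⟨z, rfl, hvz⟩ := hM.exists_eq_and_adj hf hvf
    rwa [← hv z hvz]
end
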